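/- arXiv:0806.4637 — 2 statements merged into one kernel-verified Lean document; each statement's English description precedes it below -/
import Mathlib

section
/- Let {ρ_k} be an integration theory on a sub-DGA C′_F. Then the map δρ_k satisfies d(δρ_k(A)) = (−1)^k Σ δρ_k(A′)·δρ_1(A″), where the sum is over all 2-cuts (A′, A″) of A. In particular, ρ := δρ_1 : C′_F → N is a morphism of DGAs. -/
open scoped BigOperators

noncomputable section

/-- A generator symbol `(a₀; a₁, …, aₙ; a_{n+1})` of the combinatorial DGA:
endpoint, middle sequence, endpoint. -/
abbrev GSym (S : Type) := S × List S × S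

variable {S : Type} [DecidableEq S]

/-- `lastD a l` is the last element of `a :: l`. -/
def lastD (a : S) (l : List S) : S := (a :: l).getLast (List.cons_ne_nil _ _)

/-- The full sequence `a₀, a₁, …, aₙ, a_{n+1}` of a symbol. -/
def fullSeq (A : GSym S) : List S := A.1 :: A.2.1 ++ [A.2.2]

/-- The list of 2-cuts of a symbol `A = (a₀; a₁,…,aₙ; a_{n+1})`: for each choice
`0 ≤ i < j ≤ n`, `(i,j) ≠ (0,n)`, the ordered pair
`((a₀; a₁,…,aᵢ,a_{j+1},…,aₙ; a_{n+1}), (aᵢ; a_{i+1},…,aⱼ; a_{j+1}))`. -/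
def twoCuts (A : GSym S) : List (GSym S × GSym S) :=
  (List.range A.2.1.length).flatMap fun i =>
    (List.range (A.2.1.length - i)).filterMap fun k =>
      if i = 0 ∧ k + 1 = A.2.1.length then none
      else
        some ((A.1, A.2.1.take i ++ A.2.1.drop (i + k + 1), A.2.2),
              (lastD A.1 (A.2.1.take i),
               (A.2.1.drop i).take (k + 1),
               (A.2.1.drop (i + k + 1)).headD A.2.2))

/-- One refinement step on a tuple of symbols: replace one component (in place)
by one of its 2-cuts. -/
def stepCuts (c : List (GSym S)) : List (List (GSym S)) :=
  (List.range c.length).flatMap fun p =>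
    match c.drop p with
    | [] => []
    | B :: rest => (twoCuts B).map fun AB => c.take p ++ AB.1 :: AB.2 :: rest

/-- All tuples obtainable from `c` by at most `n` refinement steps. -/
def cutsFuel : ℕ → List (GSym S) → List (List (GSym S))
  | 0, c => [c]
  | n + 1, c => (c :: (stepCuts c).flatMap (cutsFuel n)).dedup

/-- The symbol with middle letters decorated by their index (so that cuts are
taken "in terms of the indices and not the elements"). -/
def idxSym (A : GSym S) : GSym (ℕ × S) :=
  ((0, A.1), (A.2.1.zipIdx 1).map Prod.swap, (A.2.1.length + 1, A.2.2))

/-- Forget the index decorations. -/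
def unIdx (B : GSym (ℕ × S)) : GSym S := (B.1.2, B.2.1.map Prod.snd, B.2.2.2)

/-- The index-decorated cuts of `A` (k-cuts for all k, including the 1-cut). -/
def cutsIdx (A : GSym S) : List (List (GSym (ℕ × S))) :=
  cutsFuel A.2.1.length [idxSym A]

/-- All cuts of `A` (k-cuts for all `k ≥ 1`, including the trivial 1-cut),
as tuples of symbols; cuts are distinguished according to indices. -/
def cuts (A : GSym S) : List (List (GSym S)) :=
  (cutsIdx A).map fun c => c.map unIdx

/-- The cuts of `A` with exactly `k` components. -/
def cutsK (A : GSym S) (k : ℕ) : List (List (GSym S)) :=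
  (cuts A).filter fun c => c.length = k

/-- The degree-0 part of the bar construction `B(C_S)⁰` spanned by bar words
`[A₁|…|A_k]` in the degree-1 generators: formal ℚ-combinations of words. -/
abbrev Bar0 (S : Type) := List (GSym S) →₀ ℚ

/-- `Tcut(A) = Σ [A₁|…|A_k]`, summing over all cuts of `A`. -/
def Tcut (A : GSym S) : Bar0 S := ((cuts A).map fun c => Finsupp.single c (1 : ℚ)).sum

/-- An elementary cut: every component except (possibly) the first is formed of
consecutive elements of `A` (checked on the index-decorated level). -/
def elemCutsIdx (A : GSym S) : List (List (GSym (ℕ × S))) :=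
  (cutsIdx A).filter fun c =>
    c.tail.all fun B => decide ((fullSeq B) <:+: fullSeq (idxSym A))

/-- The elementary cuts of `A` (including the 1-cut). -/
def elemCuts (A : GSym S) : List (List (GSym S)) :=
  (elemCutsIdx A).map fun c => c.map unIdx

/-- All shuffles of two lists (one for each `(n,m)`-shuffle permutation). -/
def shuffles {α : Type} : List α → List α → List (List α)
  | [], l2 => [l2]
  | l1, [] => [l1]
  | a :: l1, b :: l2 =>
      ((shuffles l1 (b :: l2)).map (a :: ·)) ++ ((shuffles (a :: l1) l2).map (b :: ·))
  termination_by l1 l2 => l1.length + l2.length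
  decreasing_by all_goals simp [List.length]

/-- The empty bar word, the unit of the shuffle product. -/
def barOne {R : Type} [CommSemiring R] : List (GSym S) →₀ R := Finsupp.single [] 1

/-- The shuffle product on degree-0 bar words (all letters of degree 1, so all
signs are `+1`). -/
def barMulG {R : Type} [CommSemiring R] (x y : List (GSym S) →₀ R) :
    List (GSym S) →₀ R :=
  x.sum fun w1 c1 => y.sum fun w2 c2 =>
    (c1 * c2) • ((shuffles w1 w2).map fun w => Finsupp.single w (1 : R)).sum

/-- Shuffle product on `B(C_S)⁰`. -/
def barMul (x y : Bar0 S) : Bar0 S := barMulG x y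

/-- Product of a list of elements of `B(C_S)⁰`. -/
def listProd (l : List (Bar0 S)) : Bar0 S := l.foldr barMul barOne

/-! Applying `δ` to axiom (3): `δd = dδ` turns its left side into `d(δρ_k(A))`, `δ² = 0`
kills the term `δρ_{k+1}(A)`, and `δ(a·δb) = (δa)(δb)` carries `δ` through every summand of
the sum over 2-cuts. -/

section SpecializationOperator

variable {R G : Type*} [Ring R] [FunLike G R R] [AddMonoidHomClass G R R]

theorem map_neg_one_pow_mul (δ : G) (k : ℕ) (x : R) : δ ((-1) ^ k * x) = (-1) ^ k * δ x := by
  rcases neg_one_pow_eq_or R k with h | h <;> simp [h]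

theorem map_list_sum_mul_map {ι : Type*} (δ : G) (hδmul : ∀ x y : R, δ (x * δ y) = δ x * δ y)
    (l : List ι) (f g : ι → R) :
    δ (l.map fun i => f i * δ (g i)).sum = (l.map fun i => δ (f i) * δ (g i)).sum := by
  rw [map_list_sum, List.map_map]
  exact congrArg List.sum (List.map_congr_left fun i _ => hδmul (f i) (g i))

theorem apply_map_eq_map_of_apply_eq_neg_map_add (d δ : G) (hdδ : ∀ x : R, δ (d x) = d (δ x))
    (hδδ : ∀ x : R, δ (δ x) = 0) {x y z : R} (h : d x = -δ y + z) : d (δ x) = δ z := by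
  rw [← hdδ, h, map_add, map_neg, hδδ, neg_zero, zero_add]

end SpecializationOperator

theorem delta_rho_differential_general {F R : Type} [CommRing R] [Algebra ℚ R]
    (d δ : R →ₗ[ℚ] R)
    (hdδ : ∀ x : R, δ (d x) = d (δ x))
    (hδδ : ∀ x : R, δ (δ x) = 0)
    (hδmul : ∀ x y : R, δ (x * δ y) = δ x * δ y)
    (ρ : ℕ → GSym F → R)
    (hd : ∀ k, 1 ≤ k → ∀ A : GSym F,
      d (ρ k A) = -δ (ρ (k + 1) A) +
        (-1 : R) ^ k * ((twoCuts A).map fun p => ρ k p.1 * δ (ρ 1 p.2)).sum) :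
    (∀ k, 1 ≤ k → ∀ A : GSym F,
      d (δ (ρ k A)) =
        (-1 : R) ^ k * ((twoCuts A).map fun p => δ (ρ k p.1) * δ (ρ 1 p.2)).sum)
    ∧ (∀ A : GSym F,
      d (δ (ρ 1 A)) = -((twoCuts A).map fun p => δ (ρ 1 p.1) * δ (ρ 1 p.2)).sum) := by
  have differential_delta_rho : ∀ k, 1 ≤ k → ∀ A : GSym F,
      d (δ (ρ k A)) =
        (-1 : R) ^ k * ((twoCuts A).map fun p => δ (ρ k p.1) * δ (ρ 1 p.2)).sum := by
    intro k hk A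
    rw [apply_map_eq_map_of_apply_eq_neg_map_add d δ hdδ hδδ (hd k hk A),
      map_neg_one_pow_mul, map_list_sum_mul_map δ hδmul]
  refine ⟨differential_delta_rho, fun A => ?_⟩
  rw [differential_delta_rho 1 le_rfl A, pow_one, neg_one_mul]

/-- Let `{ρ_k}` be an integration theory (abstractly: values in a
commutative differential algebra `R` equipped with the specialization operator
`δ` satisfying `δd = dδ`, `δ² = 0` and `δ(a·δb) = (δa)(δb)`, and satisfying the
integration-theory axiom (3)). Then
`d(δρ_k(A)) = (−1)^k Σ_{2-cuts} δρ_k(A′)·δρ₁(A″)`; in particular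
`ρ := δρ₁` is a morphism of DGAs: `d(ρ(A)) = −Σ_{2-cuts} ρ(A′)·ρ(A″)`. -/
theorem delta_rho_differential {F R : Type} [DecidableEq F] [CommRing R] [Algebra ℚ R]
    (d δ : R →ₗ[ℚ] R)
    (hdδ : ∀ x : R, δ (d x) = d (δ x))
    (hδδ : ∀ x : R, δ (δ x) = 0)
    (hδmul : ∀ x y : R, δ (x * δ y) = δ x * δ y)
    (ρ : ℕ → GSym F → R)
    (hd : ∀ k, 1 ≤ k → ∀ A : GSym F,
      d (ρ k A) = -δ (ρ (k + 1) A) +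
        (-1 : R) ^ k * ((twoCuts A).map fun p => ρ k p.1 * δ (ρ 1 p.2)).sum) :
    (∀ k, 1 ≤ k → ∀ A : GSym F,
      d (δ (ρ k A)) =
        (-1 : R) ^ k * ((twoCuts A).map fun p => δ (ρ k p.1) * δ (ρ 1 p.2)).sum)
    ∧ (∀ A : GSym F,
      d (δ (ρ 1 A)) = -((twoCuts A).map fun p => δ (ρ 1 p.1) * δ (ρ 1 p.2)).sum) :=
  delta_rho_differential_general d δ hdδ hδδ hδmul ρ hd
end
end

section
/- Iterated integrals satisfy the shuffle product formula: for smooth 1-forms ω_1, …, ω_{n+m} on a manifold M and a piecewise-smooth path γ : [0,1] → M, (∫_γ ω_1 ∘ ⋯ ∘ ω_n)·(∫_γ ω_{n+1} ∘ ⋯ ∘ ω_{n+m}) = Σ_{σ ∈ Σ_{n,m}} ∫_γ ω_{σ(1)} ∘ ⋯ ∘ ω_{σ(n+m)}, where Σ_{n,m} is the set of (n,m)-shuffles. -/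
open scoped BigOperators
open MeasureTheory

noncomputable section

/-! ## Statement 19: the shuffle product formula for iterated integrals -/

/-- The iterated integral `∫_{0 ≤ t₁ ≤ ⋯ ≤ t_k ≤ 1} f₁(t₁)⋯f_k(t_k) dt₁⋯dt_k`
(for a path `γ` with `γ*ωᵢ = fᵢ(t)dt`, this is `∫_γ ω₁∘⋯∘ω_k`). -/
def iterInt (k : ℕ) (f : Fin k → ℝ → ℝ) : ℝ :=
  ∫ t in {t : Fin k → ℝ | (∀ i, t i ∈ Set.Icc (0 : ℝ) 1) ∧ Monotone t},
    ∏ i, f i (t i)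

/-- An `(n,m)`-shuffle: a permutation `σ` of `{1,…,n+m}` with
`σ⁻¹(1) < ⋯ < σ⁻¹(n)` and `σ⁻¹(n+1) < ⋯ < σ⁻¹(n+m)`. -/
def IsShuffle (n m : ℕ) (σ : Equiv.Perm (Fin (n + m))) : Prop :=
  StrictMono (fun i : Fin n => σ⁻¹ (Fin.castAdd m i)) ∧
    StrictMono (fun j : Fin m => σ⁻¹ (Fin.natAdd n j))

namespace ShuffleAux

variable {k : ℕ}

lemma measurableSet_cube (k : ℕ) :
    MeasurableSet {u : Fin k → ℝ | ∀ i, u i ∈ Set.Icc (0:ℝ) 1} := by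
  have h : {u : Fin k → ℝ | ∀ i, u i ∈ Set.Icc (0:ℝ) 1}
      = Set.pi Set.univ fun _ : Fin k => Set.Icc (0:ℝ) 1 := by
    ext u; simp [Set.mem_pi, Pi.le_def, forall_and]
  rw [h]
  exact MeasurableSet.univ_pi fun _ => measurableSet_Icc

lemma measurableSet_monoComp (g : Fin k → Fin k) :
    MeasurableSet {u : Fin k → ℝ | Monotone (u ∘ g)} := by
  have h : {u : Fin k → ℝ | Monotone (u ∘ g)} =
      ⋂ (i : Fin k) (j : Fin k) (_ : i ≤ j), {u : Fin k → ℝ | u (g i) ≤ u (g j)} := by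
    ext u
    simp only [Set.mem_iInter, Set.mem_setOf_eq]
    exact ⟨fun h i j hij => h hij, fun h a b hab => h a b hab⟩
  rw [h]
  exact MeasurableSet.iInter fun i => MeasurableSet.iInter fun j => MeasurableSet.iInter fun _ =>
    measurableSet_le (measurable_pi_apply _) (measurable_pi_apply _)

lemma measurableSet_strictMonoComp (g : Fin k → Fin k) :
    MeasurableSet {u : Fin k → ℝ | StrictMono (u ∘ g)} := by
  have h : {u : Fin k → ℝ | StrictMono (u ∘ g)} =
      ⋂ (i : Fin k) (j : Fin k) (_ : i < j), {u : Fin k → ℝ | u (g i) < u (g j)} := by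
    ext u
    simp only [Set.mem_iInter, Set.mem_setOf_eq]
    exact ⟨fun h i j hij => h hij, fun h a b hab => h a b hab⟩
  rw [h]
  exact MeasurableSet.iInter fun i => MeasurableSet.iInter fun j => MeasurableSet.iInter fun _ =>
    measurableSet_lt (measurable_pi_apply _) (measurable_pi_apply _)

lemma volume_eq_zero_pair {i j : Fin k} (h : i ≠ j) :
    volume {u : Fin k → ℝ | u i = u j} = 0 := by
  have hker : {u : Fin k → ℝ | u i = u j} =
      (LinearMap.ker ((LinearMap.proj i : (Fin k → ℝ) →ₗ[ℝ] ℝ) - LinearMap.proj j) :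
        Set (Fin k → ℝ)) := by
    ext u
    simp [LinearMap.mem_ker, sub_eq_zero]
  rw [hker]
  refine Measure.addHaar_submodule _ _ fun htop => ?_
  have hmem : Pi.single i (1:ℝ) ∈
      LinearMap.ker ((LinearMap.proj i : (Fin k → ℝ) →ₗ[ℝ] ℝ) - LinearMap.proj j) := by
    rw [htop]; trivial
  simp [LinearMap.mem_ker, LinearMap.sub_apply, LinearMap.proj_apply,
    Pi.single_eq_same, Pi.single_eq_of_ne (Ne.symm h)] at hmem

lemma volume_noninj (k : ℕ) :
    volume {u : Fin k → ℝ | ¬ Function.Injective u} = 0 := by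
  have hsub : {u : Fin k → ℝ | ¬ Function.Injective u} ⊆
      ⋃ (i : Fin k) (j : Fin k) (_ : i ≠ j), {u : Fin k → ℝ | u i = u j} := by
    intro u hu
    simp only [Set.mem_setOf_eq, Function.Injective, not_forall] at hu
    obtain ⟨i, j, hij, hne⟩ := hu
    exact Set.mem_iUnion.2 ⟨i, Set.mem_iUnion.2 ⟨j, Set.mem_iUnion.2 ⟨hne, hij⟩⟩⟩
  exact measure_mono_null hsub (measure_iUnion_null fun i => measure_iUnion_null fun j =>
    measure_iUnion_null fun hne => volume_eq_zero_pair hne)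

lemma integrableF (f : Fin k → ℝ → ℝ) (hf : ∀ i, Continuous (f i))
    {s : Set (Fin k → ℝ)} (hs : s ⊆ {u | ∀ i, u i ∈ Set.Icc (0:ℝ) 1}) :
    IntegrableOn (fun u => ∏ i, f i (u i)) s := by
  have hc : Continuous fun u : Fin k → ℝ => ∏ i, f i (u i) :=
    continuous_finset_prod _ fun i _ => (hf i).comp (continuous_apply i)
  have hcube : {u : Fin k → ℝ | ∀ i, u i ∈ Set.Icc (0:ℝ) 1} =
      Set.Icc (0 : Fin k → ℝ) 1 := by
    ext u
    simp [Set.mem_Icc, Pi.le_def, forall_and]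
  refine IntegrableOn.mono_set ?_ hs
  rw [hcube]
  exact hc.continuousOn.integrableOn_compact isCompact_Icc

lemma iterInt_perm (k : ℕ) (f : Fin k → ℝ → ℝ) (σ : Equiv.Perm (Fin k)) :
    iterInt k (fun i => f (σ i)) =
      ∫ u in {u : Fin k → ℝ | (∀ i, u i ∈ Set.Icc (0:ℝ) 1) ∧ Monotone (u ∘ σ)},
        ∏ i, f i (u i) := by
  set e : (Fin k → ℝ) ≃ᵐ (Fin k → ℝ) :=
    MeasurableEquiv.piCongrLeft (fun _ => ℝ) (σ : Fin k ≃ Fin k).symm with he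
  have key : ∀ u : Fin k → ℝ, e u = u ∘ σ := by
    intro u; funext j
    have h1 := MeasurableEquiv.piCongrLeft_apply_apply
      ((σ : Fin k ≃ Fin k).symm) (β := fun _ => ℝ) (x := u) (σ j)
    simpa [he] using h1
  have hmp : MeasurePreserving e volume volume :=
    volume_measurePreserving_piCongrLeft (fun _ => ℝ) (σ : Fin k ≃ Fin k).symm
  have hres := hmp.setIntegral_preimage_emb e.measurableEmbedding
    (fun t => ∏ i, f (σ i) (t i))
    {t : Fin k → ℝ | (∀ i, t i ∈ Set.Icc (0 : ℝ) 1) ∧ Monotone t}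
  unfold iterInt
  rw [← hres]
  have hpre : e ⁻¹' {t : Fin k → ℝ | (∀ i, t i ∈ Set.Icc (0:ℝ) 1) ∧ Monotone t}
      = {u : Fin k → ℝ | (∀ i, u i ∈ Set.Icc (0:ℝ) 1) ∧ Monotone (u ∘ σ)} := by
    ext u
    simp only [Set.mem_preimage, Set.mem_setOf_eq, key u]
    constructor
    · rintro ⟨h1, h2⟩
      exact ⟨fun i => by simpa using h1 (σ.symm i), h2⟩
    · rintro ⟨h1, h2⟩
      exact ⟨fun i => h1 (σ i), h2⟩
  have hInt : ∀ u : Fin k → ℝ, (∏ i, f (σ i) (e u i)) = ∏ i, f i (u i) := by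
    intro u
    have hco : ∀ i, e u i = u (σ i) := fun i => congrFun (key u) i
    calc (∏ i, f (σ i) (e u i)) = ∏ i, f (σ i) (u (σ i)) :=
          Finset.prod_congr rfl fun i _ => by rw [hco]
      _ = ∏ i, f i (u i) := Equiv.prod_comp σ fun i => f i (u i)
  rw [hpre]
  simp only [hInt]

lemma prodSide (n m : ℕ) (f : Fin (n + m) → ℝ → ℝ) :
    iterInt n (fun i => f (Fin.castAdd m i)) * iterInt m (fun j => f (Fin.natAdd n j)) =
      ∫ u in {u : Fin (n + m) → ℝ | (∀ i, u i ∈ Set.Icc (0:ℝ) 1) ∧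
          Monotone (u ∘ Fin.castAdd m) ∧ Monotone (u ∘ Fin.natAdd n)},
        ∏ i, f i (u i) := by
  set e : (Fin (n + m) → ℝ) ≃ᵐ (Fin n → ℝ) × (Fin m → ℝ) :=
    (MeasurableEquiv.piCongrLeft (fun _ => ℝ) finSumFinEquiv).symm.trans
      (MeasurableEquiv.sumPiEquivProdPi fun _ => ℝ) with he
  have hsymm : ∀ (u : Fin (n + m) → ℝ) (s : Fin n ⊕ Fin m),
      (MeasurableEquiv.piCongrLeft (fun _ : Fin (n + m) => ℝ) finSumFinEquiv).symm u s
        = u (finSumFinEquiv s) := by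
    intro u s
    have h1 := MeasurableEquiv.piCongrLeft_apply_apply finSumFinEquiv (β := fun _ => ℝ)
      ((MeasurableEquiv.piCongrLeft (fun _ : Fin (n + m) => ℝ) finSumFinEquiv).symm u) s
    rw [MeasurableEquiv.apply_symm_apply] at h1
    exact h1.symm
  have happ : ∀ u : Fin (n + m) → ℝ,
      e u = (fun i => u (Fin.castAdd m i), fun j => u (Fin.natAdd n j)) := by
    intro u
    have : e u = ((MeasurableEquiv.sumPiEquivProdPi fun _ : Fin n ⊕ Fin m => ℝ)
        ((MeasurableEquiv.piCongrLeft (fun _ => ℝ) finSumFinEquiv).symm u)) := rfl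
    rw [this]
    ext x
    · simp [MeasurableEquiv.coe_sumPiEquivProdPi, Equiv.sumPiEquivProdPi, hsymm]
    · simp [MeasurableEquiv.coe_sumPiEquivProdPi, Equiv.sumPiEquivProdPi, hsymm]
  have hmp : MeasurePreserving e volume volume := by
    have h1 : MeasurePreserving
        (MeasurableEquiv.piCongrLeft (fun _ : Fin (n + m) => ℝ) finSumFinEquiv).symm
        volume volume :=
      (volume_measurePreserving_piCongrLeft (fun _ => ℝ) finSumFinEquiv).symm _
    have h2 := volume_measurePreserving_sumPiEquivProdPi (fun _ : Fin n ⊕ Fin m => ℝ)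
    exact h2.comp h1
  unfold iterInt
  rw [← MeasureTheory.setIntegral_prod_mul
    (fun t : Fin n → ℝ => ∏ i, f (Fin.castAdd m i) (t i))
    (fun t : Fin m → ℝ => ∏ j, f (Fin.natAdd n j) (t j)), ← MeasureTheory.Measure.volume_eq_prod]
  have hres := hmp.setIntegral_preimage_emb e.measurableEmbedding
    (fun z : (Fin n → ℝ) × (Fin m → ℝ) =>
      (∏ i, f (Fin.castAdd m i) (z.1 i)) * ∏ j, f (Fin.natAdd n j) (z.2 j))
    ({t : Fin n → ℝ | (∀ i, t i ∈ Set.Icc (0:ℝ) 1) ∧ Monotone t} ×ˢ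
      {t : Fin m → ℝ | (∀ i, t i ∈ Set.Icc (0:ℝ) 1) ∧ Monotone t})
  rw [← hres]
  have hpre : e ⁻¹' ({t : Fin n → ℝ | (∀ i, t i ∈ Set.Icc (0:ℝ) 1) ∧ Monotone t} ×ˢ
      {t : Fin m → ℝ | (∀ i, t i ∈ Set.Icc (0:ℝ) 1) ∧ Monotone t})
      = {u : Fin (n + m) → ℝ | (∀ i, u i ∈ Set.Icc (0:ℝ) 1) ∧
          Monotone (u ∘ Fin.castAdd m) ∧ Monotone (u ∘ Fin.natAdd n)} := by
    ext u
    simp only [Set.mem_preimage, happ u, Set.mem_prod, Set.mem_setOf_eq]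
    constructor
    · rintro ⟨⟨hc1, hm1⟩, hc2, hm2⟩
      refine ⟨fun i => ?_, hm1, hm2⟩
      exact Fin.addCases (fun i => hc1 i) (fun j => hc2 j) i
    · rintro ⟨hc, hm1, hm2⟩
      exact ⟨⟨fun i => hc _, hm1⟩, fun j => hc _, hm2⟩
  have hInt : ∀ u : Fin (n + m) → ℝ,
      ((∏ i, f (Fin.castAdd m i) ((e u).1 i)) * ∏ j, f (Fin.natAdd n j) ((e u).2 j))
        = ∏ i, f i (u i) := by
    intro u
    rw [happ u]
    exact (Fin.prod_univ_add (f := fun i => f i (u i))).symm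
  rw [hpre]
  simp only [hInt]

end ShuffleAux

open Classical in
/-- Iterated integrals satisfy the shuffle product formula:
`(∫_γ ω₁∘⋯∘ωₙ)·(∫_γ ω_{n+1}∘⋯∘ω_{n+m}) = Σ_{(n,m)-shuffles σ} ∫_γ ω_{σ(1)}∘⋯∘ω_{σ(n+m)}`. -/
theorem iterated_integral_shuffle (n m : ℕ) (f : Fin (n + m) → ℝ → ℝ)
    (hf : ∀ i, Continuous (f i)) :
    iterInt n (fun i => f (Fin.castAdd m i)) * iterInt m (fun j => f (Fin.natAdd n j)) =
      ∑ σ : Equiv.Perm (Fin (n + m)),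
        if IsShuffle n m σ then iterInt (n + m) (fun i => f (σ i)) else 0 := by
  classical
  set E : Equiv.Perm (Fin (n + m)) → Set (Fin (n + m) → ℝ) :=
    fun σ => {u | (∀ i, u i ∈ Set.Icc (0:ℝ) 1) ∧ Monotone (u ∘ σ)} with hE
  set E' : Equiv.Perm (Fin (n + m)) → Set (Fin (n + m) → ℝ) :=
    fun σ => {u | (∀ i, u i ∈ Set.Icc (0:ℝ) 1) ∧ StrictMono (u ∘ σ)} with hE'
  set S : Finset (Equiv.Perm (Fin (n + m))) := Finset.univ.filter (IsShuffle n m) with hS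
  have hNull := ShuffleAux.volume_noninj (n + m)
  -- E' σ ⊆ E σ
  have hsubE : ∀ σ, E' σ ⊆ E σ := fun σ u hu => ⟨hu.1, hu.2.monotone⟩
  -- E σ =ᵐ E' σ
  have haeEE' : ∀ σ, E σ =ᵐ[volume] E' σ := by
    intro σ
    rw [MeasureTheory.ae_eq_set]
    constructor
    · refine measure_mono_null ?_ hNull
      rintro u ⟨⟨hc, hm⟩, hn⟩
      intro hinj
      exact hn ⟨hc, hm.strictMono_of_injective (hinj.comp σ.injective)⟩
    · exact measure_mono_null (fun u hu => absurd (hsubE σ hu.1) hu.2) measure_empty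
  -- measurability
  have hmeasE' : ∀ σ : Equiv.Perm (Fin (n + m)), MeasurableSet (E' σ) := by
    intro σ
    have h0 : E' σ = {u : Fin (n + m) → ℝ | ∀ i, u i ∈ Set.Icc (0:ℝ) 1} ∩
        {u | StrictMono (u ∘ σ)} := rfl
    rw [h0]
    exact (ShuffleAux.measurableSet_cube _).inter (ShuffleAux.measurableSet_strictMonoComp _)
  -- disjointness
  have hdisj : (↑S : Set (Equiv.Perm (Fin (n + m)))).Pairwise (Function.onFun Disjoint E') := by
    intro σ _ τ _ hne
    rw [Function.onFun, Set.disjoint_left]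
    intro u hσ hτ
    apply hne
    have h1 : StrictMono (u ∘ σ) := hσ.2
    have h2 : StrictMono (u ∘ τ) := hτ.2
    have hφ : StrictMono fun i => τ.symm (σ i) := by
      intro i j hij
      have h3 : u (σ i) < u (σ j) := h1 hij
      have h4 : (u ∘ τ) (τ.symm (σ i)) < (u ∘ τ) (τ.symm (σ j)) := by
        simpa [Function.comp] using h3
      exact h2.lt_iff_lt.1 h4
    have hrange : Set.range (fun i => τ.symm (σ i)) = Set.range (id : Fin (n + m) → Fin (n + m)) := by
      rw [Set.range_id]
      exact (σ.trans τ.symm).surjective.range_eq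
    haveI : WellFoundedLT (Fin (n + m)) := Finite.to_wellFoundedLT
    have hid : (fun i => τ.symm (σ i)) = id := (hφ.range_inj strictMono_id).1 hrange
    refine Equiv.ext fun i => ?_
    have h5 : τ.symm (σ i) = i := congrFun hid i
    have h6 := congrArg τ h5
    simpa using h6
  -- E' σ ⊆ A for shuffles
  have hAsub : ∀ σ ∈ S, E' σ ⊆ {u : Fin (n + m) → ℝ | (∀ i, u i ∈ Set.Icc (0:ℝ) 1) ∧
      Monotone (u ∘ Fin.castAdd m) ∧ Monotone (u ∘ Fin.natAdd n)} := by
    intro σ hσ u hu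
    have hsh : IsShuffle n m σ := (Finset.mem_filter.1 hσ).2
    refine ⟨hu.1, ?_, ?_⟩
    · have heq : (u ∘ σ) ∘ (fun i => σ⁻¹ (Fin.castAdd m i)) = u ∘ Fin.castAdd m := by
        funext i; simp [Function.comp]
      rw [← heq]
      exact hu.2.monotone.comp hsh.1.monotone
    · have heq : (u ∘ σ) ∘ (fun j => σ⁻¹ (Fin.natAdd n j)) = u ∘ Fin.natAdd n := by
        funext j; simp [Function.comp]
      rw [← heq]
      exact hu.2.monotone.comp hsh.2.monotone
  -- A ∩ injective ⊆ union
  have hArev : {u : Fin (n + m) → ℝ | (∀ i, u i ∈ Set.Icc (0:ℝ) 1) ∧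
      Monotone (u ∘ Fin.castAdd m) ∧ Monotone (u ∘ Fin.natAdd n)} \
        {u | ¬ Function.Injective u} ⊆ ⋃ σ ∈ S, E' σ := by
    rintro u ⟨⟨hc, hm1, hm2⟩, hinj'⟩
    have hinj : Function.Injective u := not_not.1 hinj'
    set σ := Tuple.sort u with hσ
    have hmono : Monotone (u ∘ σ) := Tuple.monotone_sort u
    have hsm : StrictMono (u ∘ σ) := hmono.strictMono_of_injective (hinj.comp σ.injective)
    have hsh : IsShuffle n m σ := by
      constructor
      · intro i j hij
        have h1 : u (Fin.castAdd m i) < u (Fin.castAdd m j) := by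
          refine lt_of_le_of_ne (hm1 hij.le) fun heq => ?_
          exact absurd ((Fin.strictMono_castAdd m).injective (hinj heq)) hij.ne
        have h2 : (u ∘ σ) (σ⁻¹ (Fin.castAdd m i)) < (u ∘ σ) (σ⁻¹ (Fin.castAdd m j)) := by
          simpa [Function.comp] using h1
        exact hsm.lt_iff_lt.1 h2
      · intro i j hij
        have h1 : u (Fin.natAdd n i) < u (Fin.natAdd n j) := by
          refine lt_of_le_of_ne (hm2 hij.le) fun heq => ?_
          exact absurd ((Fin.strictMono_natAdd n).injective (hinj heq)) hij.ne
        have h2 : (u ∘ σ) (σ⁻¹ (Fin.natAdd n i)) < (u ∘ σ) (σ⁻¹ (Fin.natAdd n j)) := by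
          simpa [Function.comp] using h1
        exact hsm.lt_iff_lt.1 h2
    exact Set.mem_biUnion (Finset.mem_coe.2 (Finset.mem_filter.2 ⟨Finset.mem_univ _, hsh⟩))
      ⟨hc, hsm⟩
  -- A =ᵐ union
  have hAae : {u : Fin (n + m) → ℝ | (∀ i, u i ∈ Set.Icc (0:ℝ) 1) ∧
      Monotone (u ∘ Fin.castAdd m) ∧ Monotone (u ∘ Fin.natAdd n)} =ᵐ[volume]
        ⋃ σ ∈ S, E' σ := by
    rw [MeasureTheory.ae_eq_set]
    constructor
    · refine measure_mono_null ?_ hNull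
      rintro u ⟨huA, hnot⟩
      by_contra hni
      exact hnot (hArev ⟨huA, hni⟩)
    · exact measure_mono_null (fun u hu => absurd (Set.iUnion₂_subset hAsub hu.1) hu.2)
        measure_empty
  -- integrability
  have hintE' : ∀ σ ∈ S, IntegrableOn (fun u => ∏ i, f i (u i)) (E' σ) volume :=
    fun σ _ => ShuffleAux.integrableF f hf fun u hu => hu.1
  -- final chain
  rw [ShuffleAux.prodSide n m f, ← Finset.sum_filter, ← hS]
  calc ∫ u in {u : Fin (n + m) → ℝ | (∀ i, u i ∈ Set.Icc (0:ℝ) 1) ∧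
          Monotone (u ∘ Fin.castAdd m) ∧ Monotone (u ∘ Fin.natAdd n)}, ∏ i, f i (u i)
      = ∫ u in ⋃ σ ∈ S, E' σ, ∏ i, f i (u i) := setIntegral_congr_set hAae
    _ = ∑ σ ∈ S, ∫ u in E' σ, ∏ i, f i (u i) :=
        integral_biUnion_finset S (fun σ _ => hmeasE' σ) hdisj hintE'
    _ = ∑ σ ∈ S, ∫ u in E σ, ∏ i, f i (u i) :=
        Finset.sum_congr rfl fun σ _ => (setIntegral_congr_set (haeEE' σ)).symm
    _ = ∑ σ ∈ S, iterInt (n + m) (fun i => f (σ i)) :=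
        Finset.sum_congr rfl fun σ _ => (ShuffleAux.iterInt_perm _ f σ).symm
end
end
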